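/- Let {f̂(n)}_{n∈ℤ} be complex numbers such that f̂(n) + f̂(−n) ∈ K(θ1) for all n ≥ 1, for some θ1 ∈ [0, π/2). If the symmetric partial sums Σ_{k=−n}^{n} f̂(k)e^{ikx} converge at every real x and the sum function f is continuous (i.e. f ∈ C_{2π}), then Σ_{n=1}^{∞} |f̂(n) + f̂(−n)| < ∞. -/

import Mathlib

/-!
At `x = 0` the symmetric partial sums are `f̂(0) + Σ_{n < N} aₙ` with
`aₙ = f̂(n+1) + f̂(-n-1)`, so `Σ aₙ` converges. Every `aₙ` lies in the sector `K(θ₁)`, where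
`cos θ₁ · ‖z‖ ≤ Re z` with `cos θ₁ > 0`; hence the nonnegative series `Σ Re aₙ` converges and
dominates `cos θ₁ · Σ ‖aₙ‖`.
-/

open Filter Complex Real

noncomputable section

/-- `K(θ) = {z ∈ ℂ : |arg z| ≤ θ}`. -/
def Kset (θ : ℝ) : Set ℂ := {z : ℂ | |Complex.arg z| ≤ θ}

open scoped Topology

theorem Finset.sum_Icc_neg_natCast {M : Type*} [AddCommMonoid M] (h : ℤ → M) (N : ℕ) :
    ∑ k ∈ Finset.Icc (-(N : ℤ)) N, h k
      = h 0 + ∑ i ∈ Finset.range N, (h ((i : ℤ) + 1) + h (-(i : ℤ) - 1)) := by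
  induction N with
  | zero => simp
  | succ n ih =>
    have hIcc : Finset.Icc (-((n + 1 : ℕ) : ℤ)) ((n + 1 : ℕ) : ℤ)
        = insert (-(n : ℤ) - 1) (insert ((n : ℤ) + 1) (Finset.Icc (-(n : ℤ)) n)) := by
      ext k
      simp only [Finset.mem_Icc, Finset.mem_insert]
      omega
    rw [hIcc, Finset.sum_insert, Finset.sum_insert, ih, Finset.sum_range_succ]
    · abel
    · simp only [Finset.mem_Icc]; omega
    · simp only [Finset.mem_insert, Finset.mem_Icc]; omega

theorem Complex.cos_mul_norm_le_re_of_abs_arg_le {z : ℂ} {θ : ℝ} (hz : |arg z| ≤ θ)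
    (hθ : θ ≤ π) : Real.cos θ * ‖z‖ ≤ z.re := by
  have hcos : Real.cos θ ≤ Real.cos (arg z) := by
    rw [← Real.cos_abs (arg z)]
    exact Real.cos_le_cos_of_nonneg_of_le_pi (abs_nonneg _) hθ hz
  rw [← norm_mul_cos_arg z, mul_comm]
  exact mul_le_mul_of_nonneg_left hcos (norm_nonneg z)

theorem Complex.summable_norm_of_tendsto_sum_of_abs_arg_le {a : ℕ → ℂ} {s : ℂ} {θ : ℝ}
    (hθ : 0 ≤ θ) (hθ' : θ < π / 2) (ha : ∀ n, |arg (a n)| ≤ θ)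
    (hs : Tendsto (fun N => ∑ i ∈ Finset.range N, a i) atTop (𝓝 s)) :
    Summable fun n => ‖a n‖ := by
  have hcos : 0 < Real.cos θ := Real.cos_pos_of_mem_Ioo ⟨by linarith [Real.pi_pos], hθ'⟩
  have hbound n : Real.cos θ * ‖a n‖ ≤ (a n).re :=
    cos_mul_norm_le_re_of_abs_arg_le (ha n) (by linarith [Real.pi_pos])
  have hre_nonneg n : 0 ≤ (a n).re := (by positivity : 0 ≤ Real.cos θ * ‖a n‖).trans (hbound n)
  have hre : Summable fun n => (a n).re := by
    refine ((hasSum_iff_tendsto_nat_of_nonneg hre_nonneg s.re).2 ?_).summable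
    simpa only [Function.comp_def, re_sum] using (continuous_re.tendsto s).comp hs
  refine (hre.mul_left (Real.cos θ)⁻¹).of_nonneg_of_le (fun n => norm_nonneg _) fun n => ?_
  rw [inv_mul_eq_div, le_div_iff₀ hcos, mul_comm]
  exact hbound n

theorem stmt_3 (fhat : ℤ → ℂ) (f : ℝ → ℂ) (θ₁ : ℝ) (hθ₁ : 0 ≤ θ₁) (hθ₁' : θ₁ < Real.pi / 2)
    (hK : ∀ n : ℕ, 1 ≤ n → (fhat (n : ℤ) + fhat (-(n : ℤ))) ∈ Kset θ₁)
    (hconv : ∀ x : ℝ, Filter.Tendsto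
      (fun N : ℕ => ∑ k ∈ Finset.Icc (-(N : ℤ)) (N : ℤ),
        fhat k * Complex.exp ((k : ℂ) * (x : ℂ) * Complex.I))
      Filter.atTop (nhds (f x))) :
    Summable (fun n : ℕ => ‖fhat ((n : ℤ) + 1) + fhat (-(n : ℤ) - 1)‖) := by
  have hsector (n : ℕ) : |arg (fhat ((n : ℤ) + 1) + fhat (-(n : ℤ) - 1))| ≤ θ₁ := by
    simpa [Kset, sub_eq_add_neg, add_comm] using hK (n + 1) n.succ_pos
  have hpartial : Tendsto (fun N => ∑ i ∈ Finset.range N,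
      (fhat ((i : ℤ) + 1) + fhat (-(i : ℤ) - 1))) atTop (𝓝 (f 0 - fhat 0)) := by
    have h0 := (hconv 0).sub_const (fhat 0)
    simp only [ofReal_zero, mul_zero, zero_mul, Complex.exp_zero, mul_one,
      Finset.sum_Icc_neg_natCast, add_sub_cancel_left] at h0
    exact h0
  exact summable_norm_of_tendsto_sum_of_abs_arg_le hθ₁ hθ₁' hsector hpartial
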